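/- Let P be the probability measure on ℕ with P({n}) = 1/2^n. For every integer n ≥ 4, the n-th quantization error equals 2^{3−n}/3, and an optimal set of n-means is {1, 2, …, n−2, Av[n−1,n], Av[n+1,∞)}, where Av[n−1,n] = E(X | X∈{n−1,n}) = n − 2/3 and Av[n+1,∞) = E(X | X ≥ n+1) = n + 2. -/

import Mathlib

/-- Distortion error of a nonempty finite set α for the measure P({n}) = 1/2^n, n ≥ 1. -/
noncomputable def errG (α : Finset ℝ) (h : α.Nonempty) : ℝ :=
  ∑' n : ℕ, (1/2^(n+1) : ℝ) * α.inf' h (fun a => ((n+1 : ℝ) - a)^2)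

/-- Conditional expectation E(X | X ∈ {k,…,l}). -/
noncomputable def avG (k l : ℕ) : ℝ :=
  (∑ j ∈ Finset.Icc k l, (j : ℝ)/2^j) / (∑ j ∈ Finset.Icc k l, (1 : ℝ)/2^j)

/-- Conditional expectation E(X | X ≥ k). -/
noncomputable def avGTail (k : ℕ) : ℝ :=
  (∑' n : ℕ, ((n+k : ℝ))/2^(n+k)) / (∑' n : ℕ, (1 : ℝ)/2^(n+k))

/-
Lower bound, by induction on the number of centres. Let `a < b` be the two smallest centres of
`α` and `k = ⌊(a + b)/2⌋₊`. The points `1, …, k` are at least as far from `α` as from `a`, the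
points beyond `k` are as close to `α \ {a}` as to `α`, and `P` restricted to `{k+1, k+2, …}` is
`2^{-k}` times `P` shifted by `k`. Hence `errG α ≥ ∑_{1 ≤ j ≤ k} 2^{-j} (j - a)^2 + 2^{-k} V_{m-1}`,
and minimising this quadratic in `a` shows that it is at least `V_m` for every `k`, where
`V_1 = 2` and `V_m = 2^{3-m}/3` for `m ≥ 2` (`errBound m`).
The set `{1, …, n-2, n - 2/3, n + 2}` attains it: its error is
`2^{-(n-1)}·1/9 + 2^{-n}·4/9 + 2^{-n}·2`, the last term being the error `2` of the single centre
`2` for the shifted measure.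
-/

open Finset

-- `E f(X)` for `X ~ P`.
noncomputable def expectGeom (f : ℝ → ℝ) : ℝ := ∑' n : ℕ, 1 / 2 ^ (n + 1) * f (n + 1)

noncomputable def sqDist (α : Finset ℝ) (h : α.Nonempty) (x : ℝ) : ℝ :=
  α.inf' h fun a => (x - a) ^ 2

theorem errG_eq_expectGeom (α : Finset ℝ) (h : α.Nonempty) :
    errG α h = expectGeom (sqDist α h) :=
  rfl

theorem hasSum_sq_sub (a : ℝ) :
    HasSum (fun n : ℕ => 1 / 2 ^ (n + 1) * ((n + 1 : ℝ) - a) ^ 2) (2 + (a - 2) ^ 2) := by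
  have hr : ‖(1 / 2 : ℝ)‖ < 1 := by norm_num
  have h0 := hasSum_choose_mul_geometric_of_norm_lt_one 0 hr
  have h1 := hasSum_choose_mul_geometric_of_norm_lt_one 1 hr
  have h2 := hasSum_choose_mul_geometric_of_norm_lt_one 2 hr
  have :=
    (((h2.mul_left 2).sub (h1.mul_left (1 + 2 * a))).add (h0.mul_left (a ^ 2))).mul_left (1 / 2)
  rw [show (2 + (a - 2) ^ 2 : ℝ) = 1 / 2 * (2 * (1 / (1 - 1 / 2) ^ (2 + 1)) -
      (1 + 2 * a) * (1 / (1 - 1 / 2) ^ (1 + 1)) + a ^ 2 * (1 / (1 - 1 / 2) ^ (0 + 1))) by ring]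
  refine this.congr_fun fun n => ?_
  rw [Nat.cast_choose_two, Nat.choose_one_right, Nat.choose_zero_right, div_pow, one_pow]
  push_cast
  field_simp
  ring

theorem summable_sq_sub (a : ℝ) :
    Summable fun n : ℕ => 1 / 2 ^ (n + 1) * ((n + 1 : ℝ) - a) ^ 2 :=
  (hasSum_sq_sub a).summable

theorem expectGeom_sq_sub (a : ℝ) : expectGeom (fun x => (x - a) ^ 2) = 2 + (a - 2) ^ 2 :=
  (hasSum_sq_sub a).tsum_eq

theorem expectGeom_mono {f g : ℝ → ℝ} (hf : ∀ n : ℕ, 0 ≤ f (n + 1))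
    (hfg : ∀ n : ℕ, f (n + 1) ≤ g (n + 1))
    (hg : Summable fun n : ℕ => 1 / 2 ^ (n + 1) * g (n + 1)) :
    expectGeom f ≤ expectGeom g := by
  have hle : ∀ n : ℕ, 1 / 2 ^ (n + 1) * f (n + 1) ≤ 1 / 2 ^ (n + 1) * g (n + 1) := fun n =>
    mul_le_mul_of_nonneg_left (hfg n) (by positivity)
  exact Summable.tsum_le_tsum hle
    (hg.of_nonneg_of_le (fun n => mul_nonneg (by positivity) (hf n)) hle) hg

theorem expectGeom_eq_sum_add {f : ℝ → ℝ}
    (hf : Summable fun n : ℕ => 1 / 2 ^ (n + 1) * f (n + 1)) (k : ℕ) :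
    expectGeom f = ∑ j ∈ range k, 1 / 2 ^ (j + 1) * f (j + 1) +
      expectGeom (fun x => f (x + k)) / 2 ^ k := by
  rw [expectGeom, ← hf.sum_add_tsum_nat_add k, expectGeom, div_eq_inv_mul, ← tsum_mul_left]
  congr 1
  refine tsum_congr fun j => ?_
  rw [pow_add, pow_add, Nat.cast_add]
  field_simp
  ring_nf

section sqDist

variable {α : Finset ℝ} (h : α.Nonempty)

theorem sqDist_nonneg (x : ℝ) : 0 ≤ sqDist α h x :=
  le_inf' h _ fun _ _ => sq_nonneg _

theorem sqDist_le {a : ℝ} (ha : a ∈ α) (x : ℝ) : sqDist α h x ≤ (x - a) ^ 2 :=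
  inf'_le _ ha

theorem sqDist_singleton (a : ℝ) : sqDist {a} (singleton_nonempty a) = fun x => (x - a) ^ 2 :=
  funext fun _ => inf'_singleton _

theorem sqDist_image_sub (c : ℝ) :
    sqDist (α.image (· - c)) (h.image _) = fun x => sqDist α h (x + c) := by
  funext x
  rw [sqDist, inf'_image]
  congr 1
  funext a
  simp only [Function.comp]
  ring

theorem summable_sqDist : Summable fun n : ℕ => 1 / 2 ^ (n + 1) * sqDist α h (n + 1) := by
  obtain ⟨a, ha⟩ := h
  refine (summable_sq_sub a).of_nonneg_of_le
    (fun n => mul_nonneg (by positivity) (sqDist_nonneg _ _)) fun n => ?_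
  exact mul_le_mul_of_nonneg_left (sqDist_le _ ha _) (by positivity)

end sqDist

theorem sum_range_sq_sub (a : ℝ) (k : ℕ) :
    ∑ j ∈ range k, 1 / 2 ^ (j + 1) * ((j + 1 : ℝ) - a) ^ 2 =
      2 + (a - 2) ^ 2 - (2 + (a - k - 2) ^ 2) / 2 ^ k := by
  have hsplit := expectGeom_eq_sum_add (f := fun x => (x - a) ^ 2) (summable_sq_sub a) k
  have htail : expectGeom (fun x => (x + k - a) ^ 2) = 2 + (a - k - 2) ^ 2 := by
    rw [show (fun x : ℝ => (x + k - a) ^ 2) = fun x => (x - (a - k)) ^ 2 by funext x; ring,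
      expectGeom_sq_sub]
  rw [expectGeom_sq_sub, htail] at hsplit
  linarith

section minSplit

variable {α : Finset ℝ} (h : α.Nonempty) (hβ : (α.erase (α.min' h)).Nonempty) {x : ℝ}

theorem sq_sub_min'_le_sqDist (hx : x ≤ (α.min' h + (α.erase (α.min' h)).min' hβ) / 2) :
    (x - α.min' h) ^ 2 ≤ sqDist α h x := by
  refine le_inf' h _ fun c hc => ?_
  have hac : α.min' h ≤ c := min'_le α c hc
  rcases eq_or_ne c (α.min' h) with rfl | hne
  · exact le_rfl
  have hbc : (α.erase (α.min' h)).min' hβ ≤ c := min'_le _ c (mem_erase.2 ⟨hne, hc⟩)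
  nlinarith

theorem sqDist_erase_min'_le (hx : (α.min' h + (α.erase (α.min' h)).min' hβ) / 2 ≤ x) :
    sqDist (α.erase (α.min' h)) hβ x ≤ sqDist α h x := by
  refine le_inf' h _ fun c hc => ?_
  rcases eq_or_ne c (α.min' h) with rfl | hne
  · have hab : α.min' h ≤ (α.erase (α.min' h)).min' hβ :=
      min'_le α _ (mem_of_mem_erase (min'_mem _ hβ))
    exact (sqDist_le hβ (min'_mem _ hβ) x).trans (by nlinarith)
  · exact sqDist_le hβ (mem_erase.2 ⟨hne, hc⟩) x

end minSplit

theorem exists_sum_add_errG_image_sub_le {α : Finset ℝ} (h : α.Nonempty)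
    (hβ : (α.erase (α.min' h)).Nonempty) :
    ∃ (a : ℝ) (k : ℕ), ∑ j ∈ range k, 1 / 2 ^ (j + 1) * ((j + 1 : ℝ) - a) ^ 2 +
      errG ((α.erase (α.min' h)).image (· - (k : ℝ))) (hβ.image _) / 2 ^ k ≤ errG α h := by
  set τ := (α.min' h + (α.erase (α.min' h)).min' hβ) / 2
  refine ⟨α.min' h, ⌊τ⌋₊, ?_⟩
  have head : ∑ j ∈ range ⌊τ⌋₊, 1 / 2 ^ (j + 1) * ((j + 1 : ℝ) - α.min' h) ^ 2 ≤
      ∑ j ∈ range ⌊τ⌋₊, 1 / 2 ^ (j + 1) * sqDist α h (j + 1) := by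
    refine sum_le_sum fun j hj =>
      mul_le_mul_of_nonneg_left (sq_sub_min'_le_sqDist h hβ ?_) (by positivity)
    exact_mod_cast (Nat.le_floor_iff' j.succ_ne_zero).1 (mem_range.1 hj)
  have tail : errG ((α.erase (α.min' h)).image (· - (⌊τ⌋₊ : ℝ))) (hβ.image _) ≤
      expectGeom fun x => sqDist α h (x + ⌊τ⌋₊) := by
    have hsum := summable_sqDist (h.image (· - (⌊τ⌋₊ : ℝ)))
    rw [sqDist_image_sub h] at hsum
    rw [errG_eq_expectGeom, sqDist_image_sub hβ]
    refine expectGeom_mono (fun n => sqDist_nonneg _ _)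
      (fun n => sqDist_erase_min'_le h hβ ?_) hsum
    change τ ≤ _
    linarith [Nat.lt_floor_add_one τ, n.cast_nonneg (α := ℝ)]
  rw [errG_eq_expectGeom α h, expectGeom_eq_sum_add (summable_sqDist h) ⌊τ⌋₊]
  gcongr

theorem sq_le_two_pow {k : ℕ} (hk : 4 ≤ k) : k ^ 2 ≤ 2 ^ k := by
  induction k, hk using Nat.le_induction with
  | base => norm_num
  | succ k hk ih => nlinarith [pow_succ 2 k]

theorem three_mul_sq_add_four_le (k : ℕ) : 3 * k ^ 2 + 4 ≤ 4 * 2 ^ k := by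
  rcases lt_or_ge k 4 with hk | hk
  · interval_cases k <;> norm_num
  · have := sq_le_two_pow hk
    have : 2 ^ 4 ≤ 2 ^ k := Nat.pow_le_pow_right two_pos hk
    omega

theorem three_mul_sq_add_nine_mul_le (k : ℕ) :
    (3 * k ^ 2 + 9) * 2 ^ k ≤ 5 * (2 ^ k) ^ 2 + 4 := by
  rcases lt_or_ge k 4 with hk | hk
  · interval_cases k <;> norm_num
  · have := sq_le_two_pow hk
    have : 2 ^ 4 ≤ 2 ^ k := Nat.pow_le_pow_right two_pos hk
    nlinarith

noncomputable def errBound (m : ℕ) : ℝ := if m ≤ 1 then 2 else 8 / 3 / 2 ^ m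

theorem errBound_of_two_le {m : ℕ} (hm : 2 ≤ m) : errBound m = 8 / 3 / 2 ^ m :=
  if_neg (by omega)

theorem errBound_one : errBound 1 = 2 :=
  if_pos le_rfl

theorem errBound_antitone : Antitone errBound := by
  refine antitone_nat_of_succ_le fun m => ?_
  rcases lt_or_ge m 2 with hm | hm
  · interval_cases m <;> norm_num [errBound]
  · rw [errBound_of_two_le hm, errBound_of_two_le (by omega), pow_succ]
    gcongr
    norm_num

/- With `t = 2^k`, `K = k` and `u = a - 2` these are the two cases of `errBound_succ_le`. Both
come from completing the square: `(t - 1) (t u² - (u - K)²) + t K² = ((t - 1) u + K)²`. -/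
theorem two_thirds_le_of_three_mul_sq_add_four_le {t K u : ℝ} (ht : 1 < t)
    (hK : 3 * K ^ 2 + 4 ≤ 4 * t) :
    2 / 3 ≤ 2 + u ^ 2 - (2 + (u - K) ^ 2) / t + 2 / t := by
  rw [← sub_nonneg]
  have : 2 + u ^ 2 - (2 + (u - K) ^ 2) / t + 2 / t - 2 / 3 =
      (4 / 3 * t + t * u ^ 2 - (u - K) ^ 2) / t := by
    field_simp; ring
  rw [this]
  apply div_nonneg _ (by linarith)
  nlinarith [sq_nonneg ((t - 1) * u + K)]

theorem half_le_of_three_mul_sq_add_nine_mul_le {t K u c : ℝ} (ht : 2 ≤ t) (hc : c ≤ 2 / 3)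
    (hK : (3 * K ^ 2 + 9) * t ≤ 5 * t ^ 2 + 4) :
    c / 2 ≤ 2 + u ^ 2 - (2 + (u - K) ^ 2) / t + c / t := by
  rw [← sub_nonneg]
  have : 2 + u ^ 2 - (2 + (u - K) ^ 2) / t + c / t - c / 2 =
      (2 * (t - 1) + t * u ^ 2 - (u - K) ^ 2 - c * (t / 2 - 1)) / t := by
    field_simp; ring
  rw [this]
  apply div_nonneg _ (by linarith)
  have hct : c * (t / 2 - 1) * (t - 1) ≤ 2 / 3 * (t / 2 - 1) * (t - 1) := by
    have : 0 ≤ (t / 2 - 1) * (t - 1) := mul_nonneg (by linarith) (by linarith)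
    nlinarith
  nlinarith [sq_nonneg ((t - 1) * u + K)]

theorem errBound_succ_le {m : ℕ} (hm : 1 ≤ m) (k : ℕ) (a : ℝ) :
    errBound (m + 1) ≤ 2 + (a - 2) ^ 2 - (2 + (a - k - 2) ^ 2) / 2 ^ k + errBound m / 2 ^ k := by
  rcases Nat.eq_zero_or_pos k with rfl | hk
  · simpa using errBound_antitone m.le_succ
  have ht : (2 : ℝ) ≤ 2 ^ k := by exact_mod_cast Nat.le_self_pow hk.ne' 2
  rw [show a - k - 2 = a - 2 - k by ring]
  rcases hm.eq_or_lt with rfl | hm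
  · rw [errBound_one, errBound_of_two_le le_rfl, show (8 / 3 / 2 ^ (1 + 1) : ℝ) = 2 / 3 by norm_num]
    exact two_thirds_le_of_three_mul_sq_add_four_le (by linarith)
      (by exact_mod_cast three_mul_sq_add_four_le k)
  · rw [errBound_of_two_le hm, errBound_of_two_le (by omega), pow_succ, ← div_div]
    refine half_le_of_three_mul_sq_add_nine_mul_le ht ?_
      (by exact_mod_cast three_mul_sq_add_nine_mul_le k)
    have : (4 : ℝ) ≤ 2 ^ m := by exact_mod_cast Nat.pow_le_pow_right two_pos hm
    rw [div_le_iff₀ (by positivity)]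
    linarith

theorem errBound_card_le_errG {α : Finset ℝ} (h : α.Nonempty) :
    errBound α.card ≤ errG α h := by
  suffices ∀ (m : ℕ) (α : Finset ℝ) (h : α.Nonempty), α.card = m → errBound m ≤ errG α h from
    this _ α h rfl
  intro m
  induction m with
  | zero => exact fun α h hc => absurd hc h.card_pos.ne'
  | succ m ih =>
    intro α h hc
    rcases Nat.eq_zero_or_pos m with rfl | hm
    · obtain ⟨a, rfl⟩ := card_eq_one.1 hc
      rw [errG_eq_expectGeom, sqDist_singleton, expectGeom_sq_sub, zero_add, errBound_one]
      exact le_add_of_nonneg_right (sq_nonneg _)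
    have hβc : (α.erase (α.min' h)).card = m := by
      rw [card_erase_of_mem (min'_mem α h), hc, Nat.add_sub_cancel]
    have hβ : (α.erase (α.min' h)).Nonempty := card_pos.1 (hβc ▸ hm)
    obtain ⟨a, k, hsplit⟩ := exists_sum_add_errG_image_sub_le h hβ
    have hrest := ih _ (hβ.image (· - (k : ℝ)))
      (by rw [card_image_of_injective _ (sub_left_injective), hβc])
    calc errBound (m + 1)
        ≤ 2 + (a - 2) ^ 2 - (2 + (a - k - 2) ^ 2) / 2 ^ k + errBound m / 2 ^ k :=
          errBound_succ_le hm k a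
      _ ≤ ∑ j ∈ range k, 1 / 2 ^ (j + 1) * ((j + 1 : ℝ) - a) ^ 2 +
          errG ((α.erase (α.min' h)).image (· - (k : ℝ))) (hβ.image _) / 2 ^ k := by
          rw [sum_range_sq_sub]
          gcongr
      _ ≤ errG α h := hsplit

theorem le_errG_of_card_le {n : ℕ} (hn : 2 ≤ n) {α : Finset ℝ} (h : α.Nonempty)
    (hα : α.card ≤ n) : 8 / 3 / 2 ^ n ≤ errG α h :=
  errBound_of_two_le hn ▸ (errBound_antitone hα).trans (errBound_card_le_errG h)

theorem errG_le_of_mem {n : ℕ} (hn : 2 ≤ n) {α : Finset ℝ} (h : α.Nonempty)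
    (hint : ∀ j ∈ Icc 1 (n - 2), (j : ℝ) ∈ α) (hlo : (n : ℝ) - 2 / 3 ∈ α)
    (hhi : (n : ℝ) + 2 ∈ α) : errG α h ≤ 8 / 3 / 2 ^ n := by
  obtain ⟨m, rfl⟩ : ∃ m, n = m + 2 := ⟨n - 2, by omega⟩
  have hzero : ∑ j ∈ range m, 1 / 2 ^ (j + 1) * sqDist α h (j + 1) ≤ 0 := by
    refine sum_nonpos fun j hj => ?_
    have hj : ((j + 1 : ℕ) : ℝ) ∈ α :=
      hint _ (mem_Icc.2 ⟨by omega, by simp only [mem_range] at hj; omega⟩)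
    have := sqDist_le h hj ((j : ℝ) + 1)
    push_cast at this
    rw [sub_self, zero_pow two_ne_zero] at this
    exact mul_nonpos_of_nonneg_of_nonpos (by positivity) this
  have h1 : sqDist α h ((m : ℝ) + 1) ≤ 1 / 9 :=
    (sqDist_le h hlo _).trans_eq (by push_cast; ring)
  have h2 : sqDist α h ((m : ℝ) + 1 + 1) ≤ 4 / 9 :=
    (sqDist_le h hlo _).trans_eq (by push_cast; ring)
  have htail : expectGeom (fun x => sqDist α h (x + (m + 2 : ℕ))) ≤ 2 := by
    calc expectGeom (fun x => sqDist α h (x + (m + 2 : ℕ)))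
        ≤ expectGeom (fun x => (x - 2) ^ 2) :=
          expectGeom_mono (fun _ => sqDist_nonneg h _)
            (fun j => (sqDist_le h hhi _).trans_eq (by push_cast; ring)) (summable_sq_sub 2)
      _ = 2 := by rw [expectGeom_sq_sub]; norm_num
  rw [errG_eq_expectGeom, expectGeom_eq_sum_add (summable_sqDist h) (m + 2), sum_range_succ,
    sum_range_succ]
  push_cast at htail ⊢
  rw [show (8 / 3 / 2 ^ (m + 2) : ℝ) =
    0 + 1 / 2 ^ (m + 1) * (1 / 9) + 1 / 2 ^ (m + 1 + 1) * (4 / 9) + 2 / 2 ^ (m + 2) by ring]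
  gcongr

theorem avG_sub_one_self {n : ℕ} (hn : 1 ≤ n) : avG (n - 1) n = n - 2 / 3 := by
  obtain ⟨m, rfl⟩ : ∃ m, n = m + 1 := ⟨n - 1, by omega⟩
  have hIcc : Icc m (m + 1) = {m, m + 1} := by
    ext
    simp only [mem_Icc, mem_insert, mem_singleton]
    omega
  rw [avG, Nat.add_sub_cancel, hIcc, sum_pair (by omega), sum_pair (by omega)]
  push_cast
  field_simp
  ring

theorem avGTail_eq (k : ℕ) : avGTail k = k + 1 := by
  have hgeom : HasSum (fun n : ℕ => (1 / 2 : ℝ) ^ n) 2 := hasSum_geometric_two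
  have hcoe : HasSum (fun n : ℕ => (n : ℝ) * (1 / 2) ^ n) 2 := by
    have := hasSum_coe_mul_geometric_of_norm_lt_one (𝕜 := ℝ) (r := 1 / 2) (by norm_num)
    norm_num at this ⊢
    exact this
  have hnum : HasSum (fun n : ℕ => ((n + k : ℝ)) / 2 ^ (n + k)) ((2 + k * 2) / 2 ^ k) := by
    refine ((hcoe.add (hgeom.mul_left (k : ℝ))).div_const (2 ^ k)).congr_fun fun n => ?_
    rw [pow_add, div_pow, one_pow]
    field_simp
  have hden : HasSum (fun n : ℕ => (1 : ℝ) / 2 ^ (n + k)) (2 / 2 ^ k) := by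
    refine (hgeom.div_const (2 ^ k)).congr_fun fun n => ?_
    rw [pow_add, div_pow, one_pow]
    field_simp
  rw [avGTail, hnum.tsum_eq, hden.tsum_eq]
  field_simp
  ring

theorem card_image_Icc_union_pair_le {n : ℕ} (hn : 2 ≤ n) (a b : ℝ) :
    ((Icc 1 (n - 2)).image (fun j : ℕ => (j : ℝ)) ∪ {a, b}).card ≤ n := by
  have := (card_union_le _ _).trans (add_le_add (card_image_le (s := Icc 1 (n - 2))
    (f := fun j : ℕ => (j : ℝ))) (card_le_two (a := a) (b := b)))
  rw [Nat.card_Icc] at this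
  omega

theorem stmt15 (n : ℕ) (hn : 4 ≤ n) :
    avG (n-1) n = (n : ℝ) - 2/3 ∧
    avGTail (n+1) = (n : ℝ) + 2 ∧
    sInf {v : ℝ | ∃ (α : Finset ℝ) (h : α.Nonempty), α.card ≤ n ∧ v = errG α h}
      = (2 : ℝ)^(3 - (n : ℤ)) / 3 ∧
    errG ((Finset.Icc 1 (n-2)).image (fun j : ℕ => (j : ℝ)) ∪ {avG (n-1) n, avGTail (n+1)})
        (by simp) = (2 : ℝ)^(3 - (n : ℤ)) / 3 := by
  have hlo : avG (n - 1) n = n - 2 / 3 := avG_sub_one_self (by omega)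
  have hhi : avGTail (n + 1) = n + 2 := by rw [avGTail_eq]; push_cast; ring
  have hval : (2 : ℝ) ^ (3 - (n : ℤ)) / 3 = 8 / 3 / 2 ^ n := by
    rw [zpow_sub₀ two_ne_zero, zpow_natCast]; norm_num; ring
  have hcard := card_image_Icc_union_pair_le (by omega : 2 ≤ n) (avG (n - 1) n) (avGTail (n + 1))
  have hopt : errG ((Icc 1 (n - 2)).image (fun j : ℕ => (j : ℝ)) ∪
      {avG (n - 1) n, avGTail (n + 1)}) (by simp) = 8 / 3 / 2 ^ n :=
    le_antisymm
      (errG_le_of_mem (by omega) _ (fun j hj => mem_union_left _ (mem_image_of_mem _ hj))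
        (by simp [hlo]) (by simp [hhi]))
      (le_errG_of_card_le (by omega) _ hcard)
  refine ⟨hlo, hhi, ?_, hval ▸ hopt⟩
  rw [hval]
  refine IsLeast.csInf_eq ⟨⟨_, _, hcard, hopt.symm⟩, ?_⟩
  rintro _ ⟨α, h, hα, rfl⟩
  exact le_errG_of_card_le (by omega) h hα
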